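/- arXiv:1509.04107 — 8 statements merged into one kernel-verified Lean document; each statement's English description precedes it below -/
import Mathlib

section
/- Let A be an integral domain and let f ∈ A be nonzero. For i = 1, 2, let B_i be an integral domain that is integrally closed in its field of fractions, equipped with an injective ring homomorphism A → B_i making B_i a finitely generated A-module. If there is an A-algebra isomorphism between the localization of B₁ away from the image of f and the localization of B₂ away from the image of f, then there is an A-algebra isomorphism B₁ ≅ B₂. -/
/-!
Localizing an integrally closed domain at nonzero elements keeps it integrally closed inside the
localization, so each `Bᵢ`, being integral over `A`, is the integral closure of `A` in `Lᵢ`.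
An `A`-algebra isomorphism `L₁ ≃ L₂` carries one integral closure onto the other.
-/

theorem IsIntegrallyClosed.isIntegrallyClosedIn_of_isLocalization {R M : Type*} [CommRing R]
    [IsIntegrallyClosed R] [CommRing M] [Algebra R M] (S : Submonoid R)
    (hS : S ≤ nonZeroDivisors R) [IsLocalization S M] : IsIntegrallyClosedIn R M := by
  let _ : Algebra M (FractionRing R) :=
    IsLocalization.localizationAlgebraOfSubmonoidLe M (FractionRing R) S _ hS
  have _ : IsScalarTower R M (FractionRing R) :=
    IsLocalization.localization_isScalarTower_of_submonoid_le M (FractionRing R) S _ hS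
  have _ : IsFractionRing M (FractionRing R) :=
    IsFractionRing.isFractionRing_of_isLocalization S M (FractionRing R) hS
  exact (IsScalarTower.toAlgHom R M (FractionRing R)).isIntegrallyClosedIn
    (IsFractionRing.injective M (FractionRing R))
    ((isIntegrallyClosed_iff_isIntegrallyClosedIn _).mp ‹_›)

theorem IsIntegralClosure.of_isLocalization {R C M : Type*} [CommRing R] [CommRing C]
    [IsIntegrallyClosed C] [CommRing M] [Algebra R C] [Algebra C M] [Algebra R M]
    [IsScalarTower R C M] [Algebra.IsIntegral R C] (S : Submonoid C)
    (hS : S ≤ nonZeroDivisors C) [IsLocalization S M] : IsIntegralClosure C R M :=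
  have := IsIntegrallyClosed.isIntegrallyClosedIn_of_isLocalization (M := M) S hS
  .of_isIntegrallyClosedIn

noncomputable def IsIntegralClosure.equivOfAlgEquiv (R : Type*) {A₁ A₂ B₁ B₂ : Type*} [CommRing R]
    [CommRing A₁] [CommRing A₂] [CommRing B₁] [CommRing B₂]
    [Algebra R A₁] [Algebra R A₂] [Algebra R B₁] [Algebra R B₂]
    [Algebra A₁ B₁] [Algebra A₂ B₂] [IsScalarTower R A₁ B₁] [IsScalarTower R A₂ B₂]
    [IsIntegralClosure A₁ R B₁] [IsIntegralClosure A₂ R B₂] (φ : B₁ ≃ₐ[R] B₂) : A₁ ≃ₐ[R] A₂ :=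
  (IsIntegralClosure.equiv R A₁ B₁ (integralClosure R B₁)).trans <|
    φ.mapIntegralClosure.trans (IsIntegralClosure.equiv R A₂ B₂ (integralClosure R B₂)).symm

theorem stmt_0_general (A B₁ B₂ : Type*) [CommRing A]
    [CommRing B₁] [IsDomain B₁] [CommRing B₂] [IsDomain B₂]
    [Algebra A B₁] [Algebra A B₂]
    (hinj₁ : Function.Injective (algebraMap A B₁))
    (hinj₂ : Function.Injective (algebraMap A B₂))
    [Module.Finite A B₁] [Module.Finite A B₂]
    [IsIntegrallyClosed B₁] [IsIntegrallyClosed B₂]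
    (f : A) (hf : f ≠ 0)
    (L₁ L₂ : Type*) [CommRing L₁] [CommRing L₂]
    [Algebra B₁ L₁] [Algebra B₂ L₂] [Algebra A L₁] [Algebra A L₂]
    [IsScalarTower A B₁ L₁] [IsScalarTower A B₂ L₂]
    [IsLocalization.Away (algebraMap A B₁ f) L₁]
    [IsLocalization.Away (algebraMap A B₂ f) L₂]
    (e : Nonempty (L₁ ≃ₐ[A] L₂)) :
    Nonempty (B₁ ≃ₐ[A] B₂) := by
  obtain ⟨φ⟩ := e
  have : IsIntegralClosure B₁ A L₁ := .of_isLocalization _ <|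
    powers_le_nonZeroDivisors_of_noZeroDivisors ((map_ne_zero_iff _ hinj₁).mpr hf)
  have : IsIntegralClosure B₂ A L₂ := .of_isLocalization _ <|
    powers_le_nonZeroDivisors_of_noZeroDivisors ((map_ne_zero_iff _ hinj₂).mpr hf)
  exact ⟨IsIntegralClosure.equivOfAlgEquiv A φ⟩

/-- Let `A` be an integral domain and `f ∈ A` nonzero.  For `i = 1, 2`, let `Bᵢ` be an
integral domain, integrally closed in its field of fractions, equipped with an injective
ring homomorphism `A → Bᵢ` making `Bᵢ` a finitely generated `A`-module.  If the
localizations of `B₁` and `B₂` away from (the image of) `f` are isomorphic as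
`A`-algebras, then `B₁ ≅ B₂` as `A`-algebras. -/
theorem stmt_0 (A B₁ B₂ : Type*) [CommRing A] [IsDomain A]
    [CommRing B₁] [IsDomain B₁] [CommRing B₂] [IsDomain B₂]
    [Algebra A B₁] [Algebra A B₂]
    (hinj₁ : Function.Injective (algebraMap A B₁))
    (hinj₂ : Function.Injective (algebraMap A B₂))
    [Module.Finite A B₁] [Module.Finite A B₂]
    [IsIntegrallyClosed B₁] [IsIntegrallyClosed B₂]
    (f : A) (hf : f ≠ 0)
    (L₁ L₂ : Type*) [CommRing L₁] [CommRing L₂]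
    [Algebra B₁ L₁] [Algebra B₂ L₂] [Algebra A L₁] [Algebra A L₂]
    [IsScalarTower A B₁ L₁] [IsScalarTower A B₂ L₂]
    [IsLocalization.Away (algebraMap A B₁ f) L₁]
    [IsLocalization.Away (algebraMap A B₂ f) L₂]
    (e : Nonempty (L₁ ≃ₐ[A] L₂)) :
    Nonempty (B₁ ≃ₐ[A] B₂) :=
  stmt_0_general A B₁ B₂ hinj₁ hinj₂ f hf L₁ L₂ e
end

section
/- Let k and N be positive integers and let ρ : Fin N → (Fin k → ℤ) be a family of integer weight vectors. Let the torus T = (ℂˣ)^k act on ℂ^N diagonally by (t • x)_i = (∏_{a} t_a^{ρ i a}) · x_i. Assume that the only function m : Fin N → ℕ with ∑_i (m i) • (ρ i) = 0 in ℤ^k is m = 0. Then for every x ∈ ℂ^N, the origin 0 lies in the closure (for the standard topology on ℂ^N) of the orbit {t • x : t ∈ T}. -/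
/-!
View the weights `ρ i` as points of `ℝ^k`. If `0` lay in their convex hull, Carathéodory would
write it as a convex combination of an affinely independent subfamily; the weights are then the
unique solution of a linear system with rational coefficients, hence rational, and clearing
denominators gives a nonzero `m ∈ ℕ^N` with `∑ m i • ρ i = 0`. So Hahn–Banach separates `0`
from the hull: there is `c ∈ ℝ^k` with `⟨ρ i, c⟩ < 0` for all `i`. Along the one-parameter
subgroup `t a = exp (s * c a)` the `i`-th coordinate of `t • x` is `exp (s * ⟨ρ i, c⟩) * x i`,
which tends to `0` as `s → ∞`.
-/

open Finset Set Filter Topology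

theorem exists_weights_of_mem_convexHull_range {R E ι : Type*} [Field R] [LinearOrder R]
    [IsStrictOrderedRing R] [AddCommGroup E] [Module R E] [Fintype ι] {v : ι → E} {x : E}
    (hx : x ∈ convexHull R (range v)) :
    ∃ w : ι → R, (∀ i, 0 ≤ w i) ∧ ∑ i, w i = 1 ∧ ∑ i, w i • v i = x := by
  classical
  obtain ⟨s, w, hw₀, hw₁, rfl⟩ := (convexHull_range_eq_exists_affineCombination v).subset hx
  refine ⟨fun i => if i ∈ s then w i else 0, fun i => ?_, ?_, ?_⟩
  · dsimp only
    split_ifs with hi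
    exacts [hw₀ i hi, le_rfl]
  · rwa [sum_ite_mem, Finset.univ_inter]
  · simp_rw [s.affineCombination_eq_linear_combination v w hw₁, ite_smul, zero_smul,
      sum_ite_mem, Finset.univ_inter]

theorem Rat.exists_natCast_eq_mul_of_den_dvd {q : ℚ} (hq : 0 ≤ q) {d : ℕ} (hd : q.den ∣ d) :
    ∃ n : ℕ, (n : ℚ) = d * q := by
  obtain ⟨c, rfl⟩ := hd
  refine ⟨c * q.num.toNat, ?_⟩
  have hnum : ((q.num.toNat : ℤ) : ℚ) = q.num := by rw [Int.toNat_of_nonneg (Rat.num_nonneg.2 hq)]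
  push_cast at hnum ⊢
  rw [hnum, ← Rat.mul_den_eq_num]
  ring

theorem exists_nat_mul_eq_natCast_of_nonneg {ι : Type*} [Fintype ι] (w : ι → ℚ)
    (hw : ∀ i, 0 ≤ w i) : ∃ d : ℕ, 0 < d ∧ ∃ n : ι → ℕ, ∀ i, (n i : ℚ) = d * w i := by
  refine ⟨∏ j, (w j).den, prod_pos fun j _ => (w j).den_pos, ?_⟩
  choose n hn using fun i =>
    Rat.exists_natCast_eq_mul_of_den_dvd (hw i) (dvd_prod_of_mem (fun j => (w j).den) (mem_univ i))
  exact ⟨n, hn⟩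

theorem AffineIndependent.exists_ratCast_eq_weights {ι κ : Type*} [Fintype ι] {v : ι → κ → ℚ}
    (hv : AffineIndependent ℝ fun i a => (v i a : ℝ)) {w : ι → ℝ} {x : κ → ℚ}
    (hw₁ : ∑ i, w i = 1) (hwx : ∑ i, w i • (fun a => (v i a : ℝ)) = fun a => (x a : ℝ)) :
    ∃ r : ι → ℚ, ∀ i, (r i : ℝ) = w i := by
  -- A `ℚ`-linear retraction `g : ℝ → ℚ` turns `w` into rational weights with the same sum and
  -- the same barycentre, and affine independence makes such weights unique.
  obtain ⟨g, hg⟩ := (Algebra.linearMap ℚ ℝ).exists_leftInverse_of_injective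
    (LinearMap.ker_eq_bot.2 (algebraMap ℚ ℝ).injective)
  have hg_cast (q : ℚ) : g q = q := LinearMap.congr_fun hg q
  have hg_mul (y : ℝ) (q : ℚ) : g (y * q) = g y * q := by
    rw [mul_comm, ← Rat.smul_def, map_smul, smul_eq_mul, mul_comm]
  refine ⟨fun i => g (w i), fun i =>
    hv.eq_of_sum_eq_sum (s := univ) (w₁ := fun i => (g (w i) : ℝ)) ?_ ?_ i (mem_univ i)⟩
  · rw [hw₁, ← Rat.cast_sum, ← map_sum, hw₁, ← Rat.cast_one, hg_cast, Rat.cast_one]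
  · refine funext fun a => ?_
    have hxa := congrFun hwx a
    simp only [Finset.sum_apply, Pi.smul_apply, smul_eq_mul] at hxa ⊢
    rw [hxa, ← hg_cast (x a), ← hxa, map_sum]
    push_cast [hg_mul]
    rfl

theorem mem_convexHull_rat_of_mem_convexHull_real {ι κ : Type*} (v : ι → κ → ℚ) (x : κ → ℚ)
    (hx : (fun a => (x a : ℝ)) ∈ convexHull ℝ (range fun i a => (v i a : ℝ))) :
    x ∈ convexHull ℚ (range v) := by
  obtain ⟨ι', _, z, w, hz, hz_ind, hw₀, hw₁, hwx⟩ := eq_pos_convex_span_of_mem_convexHull hx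
  choose g hg using fun j => hz (mem_range_self j)
  obtain rfl : z = fun j a => (v (g j) a : ℝ) := funext fun j => (hg j).symm
  obtain ⟨r, hr⟩ := hz_ind.exists_ratCast_eq_weights hw₁ hwx
  refine mem_convexHull_of_exists_fintype r (fun j => v (g j)) (fun j => ?_) ?_
    (fun j => mem_range_self _) ?_
  · exact_mod_cast (hr j).symm ▸ (hw₀ j).le
  · have hr₁ : ∑ j, (r j : ℝ) = 1 := by simp_rw [hr]; exact hw₁
    exact_mod_cast hr₁
  · refine funext fun a => Rat.cast_injective (α := ℝ) ?_
    simpa [← hr] using congrFun hwx a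

theorem exists_ne_zero_sum_nsmul_eq_zero_of_zero_mem_convexHull {ι κ : Type*} [Fintype ι]
    (ρ : ι → κ → ℤ) (h : (0 : κ → ℝ) ∈ convexHull ℝ (range fun i a => (ρ i a : ℝ))) :
    ∃ m : ι → ℕ, m ≠ 0 ∧ ∑ i, m i • ρ i = 0 := by
  have hℚ := mem_convexHull_rat_of_mem_convexHull_real (fun i a => (ρ i a : ℚ)) 0
    (by simpa only [Pi.zero_apply, Rat.cast_zero, Rat.cast_intCast, ← Pi.zero_def] using h)
  obtain ⟨w, hw₀, hw₁, hw⟩ := exists_weights_of_mem_convexHull_range hℚ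
  obtain ⟨d, hd, m, hm⟩ := exists_nat_mul_eq_natCast_of_nonneg w hw₀
  refine ⟨m, fun hm0 => ?_, ?_⟩
  · have hsum : ∑ i, (m i : ℚ) = d := by simp_rw [hm, ← mul_sum, hw₁, mul_one]
    simp only [hm0, Pi.zero_apply, Nat.cast_zero, sum_const_zero] at hsum
    exact hd.ne (by exact_mod_cast hsum)
  · funext a
    have hwa := congrFun hw a
    simp only [Finset.sum_apply, Pi.smul_apply, smul_eq_mul, Pi.zero_apply] at hwa ⊢
    exact_mod_cast (by simp_rw [hm, mul_assoc, ← mul_sum, hwa, mul_zero] :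
      ∑ i, (m i : ℚ) * ρ i a = 0)

theorem exists_forall_lt_zero_of_zero_notMem_convexHull {ι E : Type*} [Finite ι]
    [TopologicalSpace E] [AddCommGroup E] [Module ℝ E] [IsTopologicalAddGroup E]
    [ContinuousSMul ℝ E] [LocallyConvexSpace ℝ E] [T2Space E] {v : ι → E}
    (h : (0 : E) ∉ convexHull ℝ (range v)) : ∃ f : StrongDual ℝ E, ∀ i, f (v i) < 0 := by
  obtain ⟨f, u, hfu, hu⟩ := geometric_hahn_banach_closed_point (convex_convexHull ℝ _)
    ((finite_range v).isClosed_convexHull (𝕜 := ℝ)) h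
  exact ⟨f, fun i => (hfu _ (subset_convexHull ℝ _ (mem_range_self i))).trans (by simpa using hu)⟩

def torusOrbit {ι κ : Type*} [Fintype κ] (ρ : ι → κ → ℤ) (x : ι → ℂ) : Set (ι → ℂ) :=
  {y | ∃ t : κ → ℂˣ, ∀ i, y i = (∏ a, (t a : ℂ) ^ ρ i a) * x i}

theorem zero_mem_closure_torusOrbit {ι κ : Type*} [Fintype κ] (ρ : ι → κ → ℤ) (c : κ → ℝ)
    (hc : ∀ i, ∑ a, ρ i a * c a < 0) (x : ι → ℂ) : 0 ∈ closure (torusOrbit ρ x) := by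
  have hprod (s : ℝ) (i : ι) :
      ∏ a, Complex.exp ↑(s * c a) ^ ρ i a = Real.exp (s * ∑ a, ρ i a * c a) := by
    simp_rw [← Complex.exp_int_mul, ← Complex.exp_sum]
    push_cast
    simp_rw [Finset.mul_sum]
    congr 1
    exact sum_congr rfl fun a _ => by ring
  have hmem (s : ℝ) :
      (fun i => (Real.exp (s * ∑ a, ρ i a * c a) : ℂ) * x i) ∈ torusOrbit ρ x :=
    ⟨fun a => Units.mk0 _ (Complex.exp_ne_zero ↑(s * c a)), fun i => by
      simp only [Units.val_mk0, hprod]⟩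
  refine mem_closure_of_tendsto (b := (atTop : Filter ℝ))
    (tendsto_pi_nhds.2 fun i => ?_) (Eventually.of_forall hmem)
  have hexp : Tendsto (fun s : ℝ => Real.exp (s * ∑ a, ρ i a * c a)) atTop (𝓝 0) :=
    Real.tendsto_exp_atBot.comp (tendsto_id.atTop_mul_const_of_neg (hc i))
  simpa using ((Complex.continuous_ofReal.tendsto 0).comp hexp).mul_const (x i)

theorem stmt_1_general (k N : ℕ)
    (ρ : Fin N → Fin k → ℤ)
    (hinv : ∀ m : Fin N → ℕ, (∑ i, m i • ρ i) = (0 : Fin k → ℤ) → m = 0)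
    (x : Fin N → ℂ) :
    (0 : Fin N → ℂ) ∈
      closure {y : Fin N → ℂ |
        ∃ t : Fin k → ℂˣ, ∀ i : Fin N, y i = (∏ a : Fin k, (t a : ℂ) ^ (ρ i a)) * x i} := by
  have h0 : (0 : Fin k → ℝ) ∉ convexHull ℝ (range fun i a => (ρ i a : ℝ)) := fun h =>
    let ⟨m, hm, hsum⟩ := exists_ne_zero_sum_nsmul_eq_zero_of_zero_mem_convexHull ρ h
    hm (hinv m hsum)
  obtain ⟨f, hf⟩ := exists_forall_lt_zero_of_zero_notMem_convexHull h0
  refine zero_mem_closure_torusOrbit ρ (fun a => f fun b => if a = b then 1 else 0) (fun i => ?_) x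
  have hfi := hf i
  rwa [← ContinuousLinearMap.coe_coe, LinearMap.pi_apply_eq_sum_univ] at hfi

/-- Let `T = (ℂˣ)^k` act diagonally on `ℂ^N` with integer weight vectors `ρ i ∈ ℤ^k`,
i.e. `(t • x) i = (∏ a, t a ^ ρ i a) * x i`.  If the only `m : Fin N → ℕ` with
`∑ i, m i • ρ i = 0` is `m = 0`, then for every `x ∈ ℂ^N` the origin lies in the
closure (standard topology) of the `T`-orbit of `x`. -/
theorem stmt_1 (k N : ℕ) (hk : 0 < k) (hN : 0 < N)
    (ρ : Fin N → Fin k → ℤ)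
    (hinv : ∀ m : Fin N → ℕ, (∑ i, m i • ρ i) = (0 : Fin k → ℤ) → m = 0)
    (x : Fin N → ℂ) :
    (0 : Fin N → ℂ) ∈
      closure {y : Fin N → ℂ |
        ∃ t : Fin k → ℂˣ, ∀ i : Fin N, y i = (∏ a : Fin k, (t a : ℂ) ^ (ρ i a)) * x i} :=
  stmt_1_general k N ρ hinv x
end

section
/- Let n be an even positive integer and l a positive integer. Then S₊(n) ⊆ S₋ʳᵉˢ(n,l) if and only if n ≤ l, and S₋ʳᵉˢ(n,l) ⊆ S₊(n) if and only if 2l ≤ n. -/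
/-- For an even positive integer `n`,
`S₊(n) = {(i,j) : 0 ≤ i+j < n, |i−j| ≤ n/2} ∪ {(i,j) : n ≤ i+j ≤ 2n−1, |i−j| ≤ n/2 − 1}`. -/
def SplusEven (n : ℕ) : Set (ℤ × ℤ) :=
  {p | (0 ≤ p.1 + p.2 ∧ p.1 + p.2 < (n : ℤ) ∧ |p.1 - p.2| ≤ (n : ℤ) / 2) ∨
       ((n : ℤ) ≤ p.1 + p.2 ∧ p.1 + p.2 ≤ 2 * (n : ℤ) - 1 ∧ |p.1 - p.2| ≤ (n : ℤ) / 2 - 1)}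

/-- `S₋ʳᵉˢ(n,l) = {(i,j) ∈ ℤ² : 0 ≤ i+j ≤ 2l−1 and |i−j| ≤ ⌊n/2⌋}`. -/
def Sres (n l : ℕ) : Set (ℤ × ℤ) :=
  {p | 0 ≤ p.1 + p.2 ∧ p.1 + p.2 ≤ 2 * (l : ℤ) - 1 ∧ |p.1 - p.2| ≤ (n : ℤ) / 2}

/-- For an even positive integer `n` and a positive integer `l`:
`S₊(n) ⊆ S₋ʳᵉˢ(n,l)` iff `n ≤ l`, and `S₋ʳᵉˢ(n,l) ⊆ S₊(n)` iff `2l ≤ n`. -/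
theorem stmt_3 (n l : ℕ) (hn : Even n) (hn0 : 0 < n) (hl : 0 < l) :
    (SplusEven n ⊆ Sres n l ↔ n ≤ l) ∧
    (Sres n l ⊆ SplusEven n ↔ 2 * l ≤ n) := by
  obtain ⟨k, hk⟩ := hn
  refine ⟨⟨fun h => ?_, fun h p hp => ?_⟩, ⟨fun h => ?_, fun h p hp => ?_⟩⟩
  · have := h (a := ((n : ℤ) - 1, (n : ℤ) - 1))
      (by simp only [SplusEven, Set.mem_setOf_eq, abs_le]; omega)
    simp only [Sres, Set.mem_setOf_eq, abs_le] at this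
    omega
  · simp only [SplusEven, Set.mem_setOf_eq, abs_le] at hp
    simp only [Sres, Set.mem_setOf_eq, abs_le]
    omega
  · by_contra hc
    rcases Nat.even_or_odd k with ⟨t, ht⟩ | ⟨t, ht⟩
    · have := h (a := ((3 * t : ℤ), (t : ℤ)))
        (by simp only [Sres, Set.mem_setOf_eq, abs_le]; omega)
      simp only [SplusEven, Set.mem_setOf_eq, abs_le] at this
      omega
    · have := h (a := ((3 * t + 2 : ℤ), (t + 1 : ℤ)))
        (by simp only [Sres, Set.mem_setOf_eq, abs_le]; omega)
      simp only [SplusEven, Set.mem_setOf_eq, abs_le] at this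
      omega
  · simp only [Sres, Set.mem_setOf_eq, abs_le] at hp
    simp only [SplusEven, Set.mem_setOf_eq, abs_le]
    omega
end

section
/- Let n be an odd positive integer. For all (i₁,j₁), (i₂,j₂) ∈ S₊(n), the difference (i₂−i₁, j₂−j₁) does not lie in B(n). -/
/-!
Write a lattice vector `(a, b)` in the coordinates `a - b` and `a + b`. The first two pieces of
`B(n)` have `|a - b| ≥ n` and the third has `a + b ≤ -2n`. A difference of two points of `S₊(n)`
has `|a - b| ≤ 2 ⌊(n - 1) / 2⌋ ≤ n - 1` and `a + b ≥ -(2n - 1)`, so it misses `B(n)`.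
-/

/-- For an odd positive integer `n`,
`S₊(n) = {(i,j) ∈ ℤ² : 0 ≤ i+j ≤ 2n−1 and |i−j| ≤ (n−1)/2}`. -/
def SplusOdd (n : ℕ) : Set (ℤ × ℤ) :=
  {p | 0 ≤ p.1 + p.2 ∧ p.1 + p.2 ≤ 2 * (n : ℤ) - 1 ∧ |p.1 - p.2| ≤ ((n : ℤ) - 1) / 2}

/-- `B(n) = {(j−i, −n−i) : i,j ∈ ℕ} ∪ {(−n−i, j−i) : i,j ∈ ℕ} ∪ {(−n−i, −n−j) : i,j ∈ ℕ}`. -/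
def Bset (n : ℕ) : Set (ℤ × ℤ) :=
  {p | ∃ i j : ℕ, p = ((j : ℤ) - (i : ℤ), -(n : ℤ) - (i : ℤ))} ∪
  {p | ∃ i j : ℕ, p = (-(n : ℤ) - (i : ℤ), (j : ℤ) - (i : ℤ))} ∪
  {p | ∃ i j : ℕ, p = (-(n : ℤ) - (i : ℤ), -(n : ℤ) - (j : ℤ))}

theorem le_abs_sub_or_add_le_of_mem_Bset {n : ℕ} {p : ℤ × ℤ} (hp : p ∈ Bset n) :
    (n : ℤ) ≤ |p.1 - p.2| ∨ p.1 + p.2 ≤ -2 * n := by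
  rcases hp with (⟨i, j, rfl⟩ | ⟨i, j, rfl⟩) | ⟨i, j, rfl⟩
  · left; rw [le_abs]; left; dsimp only; omega
  · left; rw [le_abs]; right; dsimp only; omega
  · right; dsimp only; omega

theorem abs_sub_lt_and_neg_lt_add_of_mem_SplusOdd {n : ℕ} {p₁ p₂ : ℤ × ℤ}
    (h₁ : p₁ ∈ SplusOdd n) (h₂ : p₂ ∈ SplusOdd n) :
    |(p₂.1 - p₁.1) - (p₂.2 - p₁.2)| < n ∧ -2 * (n : ℤ) < (p₂.1 - p₁.1) + (p₂.2 - p₁.2) := by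
  obtain ⟨-, hs₁, hd₁⟩ := h₁
  obtain ⟨hs₂, -, hd₂⟩ := h₂
  rw [abs_le] at hd₁ hd₂
  constructor
  · rw [abs_lt]; constructor <;> omega
  · omega

theorem stmt_4_general (n : ℕ)
    (p₁ p₂ : ℤ × ℤ) (h₁ : p₁ ∈ SplusOdd n) (h₂ : p₂ ∈ SplusOdd n) :
    (p₂.1 - p₁.1, p₂.2 - p₁.2) ∉ Bset n := by
  intro hB
  obtain ⟨hdiff, hsum⟩ := abs_sub_lt_and_neg_lt_add_of_mem_SplusOdd h₁ h₂
  rcases le_abs_sub_or_add_le_of_mem_Bset hB with hB | hB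
  · exact (hdiff.trans_le hB).false
  · exact hsum.not_ge hB

/-- For odd positive `n` and any `(i₁,j₁), (i₂,j₂) ∈ S₊(n)`, the difference
`(i₂−i₁, j₂−j₁)` does not lie in `B(n)`. -/
theorem stmt_4 (n : ℕ) (hn : Odd n) (hn0 : 0 < n)
    (p₁ p₂ : ℤ × ℤ) (h₁ : p₁ ∈ SplusOdd n) (h₂ : p₂ ∈ SplusOdd n) :
    (p₂.1 - p₁.1, p₂.2 - p₁.2) ∉ Bset n :=
  stmt_4_general n p₁ p₂ h₁ h₂
end

section
/- Let n be an even positive integer. For all (i₁,j₁), (i₂,j₂) ∈ S₊(n), the difference (i₂−i₁, j₂−j₁) does not lie in B(n). -/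
/-!
In the coordinates `s = i + j`, `d = i - j`, the set `S₊(n)` lies in the box `0 ≤ s < 2n`,
`|d| ≤ n/2`, and only its lower half `s < n` reaches the edges `|d| = n/2`. A difference in
the third piece of `B(n)` has `Δs ≤ -2n`, too long for the box. A difference in the first piece
has `Δd ≥ n`, so both points sit on opposite edges `|d| = n/2`, hence in the lower half, where
`|Δs| < n`; yet `Δs = Δd + 2Δj ≤ n - 2n`. The second piece is the mirror image of the first
under `(i, j) ↦ (j, i)`, which preserves `S₊(n)`.
-/

theorem mem_bset_iff {n : ℕ} {a b : ℤ} :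
    (a, b) ∈ Bset n ↔
      (b ≤ -n ∧ n ≤ a - b) ∨ (a ≤ -n ∧ n ≤ b - a) ∨ (a ≤ -n ∧ b ≤ -n) := by
  simp only [Bset, Set.mem_union, Set.mem_ofPred_eq, Prod.mk.injEq]
  constructor
  · rintro ((⟨i, j, rfl, rfl⟩ | ⟨i, j, rfl, rfl⟩) | ⟨i, j, rfl, rfl⟩) <;> omega
  · rintro (⟨hb, hab⟩ | ⟨ha, hba⟩ | ⟨ha, hb⟩)
    · exact .inl (.inl ⟨(-n - b).toNat, (a - b - n).toNat, by omega, by omega⟩)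
    · exact .inl (.inr ⟨(-n - a).toNat, (b - a - n).toNat, by omega, by omega⟩)
    · exact .inr ⟨(-n - a).toNat, (-n - b).toNat, by omega, by omega⟩

section SplusEven

variable {n : ℕ} {p q : ℤ × ℤ}

theorem swap_mem_splusEven (hp : p ∈ SplusEven n) : p.swap ∈ SplusEven n := by
  simpa only [SplusEven, Set.mem_ofPred_eq, Prod.fst_swap, Prod.snd_swap, add_comm p.2,
    abs_sub_comm p.2] using hp

theorem bounds_of_mem_splusEven (hp : p ∈ SplusEven n) :
    0 ≤ p.1 + p.2 ∧ p.1 + p.2 < 2 * n ∧ -(n / 2 : ℤ) ≤ p.1 - p.2 ∧ p.1 - p.2 ≤ n / 2 := by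
  simp only [SplusEven, Set.mem_ofPred_eq, abs_le] at hp
  omega

theorem add_lt_of_half_le_abs_sub (hp : p ∈ SplusEven n) (hd : (n / 2 : ℤ) ≤ |p.1 - p.2|) :
    p.1 + p.2 < n := by
  simp only [SplusEven, Set.mem_ofPred_eq] at hp
  omega

theorem not_le_neg_of_mem_splusEven (hp : p ∈ SplusEven n) (hq : q ∈ SplusEven n) :
    ¬(q.1 - p.1 ≤ -n ∧ q.2 - p.2 ≤ -n) := by
  have := bounds_of_mem_splusEven hp
  have := bounds_of_mem_splusEven hq
  omega

theorem not_le_sub_of_mem_splusEven (hp : p ∈ SplusEven n) (hq : q ∈ SplusEven n) :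
    ¬(q.2 - p.2 ≤ -n ∧ n ≤ (q.1 - p.1) - (q.2 - p.2)) := by
  rintro ⟨hj, hd⟩
  obtain ⟨hp₀, -, hp₁, hp₂⟩ := bounds_of_mem_splusEven hp
  obtain ⟨hq₀, -, hq₁, hq₂⟩ := bounds_of_mem_splusEven hq
  have hp_low : p.1 + p.2 < n := add_lt_of_half_le_abs_sub hp <| by
    rw [abs_sub_comm, le_abs]; omega
  have hq_low : q.1 + q.2 < n := add_lt_of_half_le_abs_sub hq <| by
    rw [le_abs]; omega
  omega

end SplusEven

theorem stmt_5_general (n : ℕ)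
    (p₁ p₂ : ℤ × ℤ) (h₁ : p₁ ∈ SplusEven n) (h₂ : p₂ ∈ SplusEven n) :
    (p₂.1 - p₁.1, p₂.2 - p₁.2) ∉ Bset n := by
  rw [mem_bset_iff]
  rintro (hB₁ | hB₂ | hB₃)
  · exact not_le_sub_of_mem_splusEven h₁ h₂ hB₁
  · exact not_le_sub_of_mem_splusEven (swap_mem_splusEven h₁) (swap_mem_splusEven h₂) hB₂
  · exact not_le_neg_of_mem_splusEven h₁ h₂ hB₃

/-- For even positive `n` and any `(i₁,j₁), (i₂,j₂) ∈ S₊(n)`, the difference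
`(i₂−i₁, j₂−j₁)` does not lie in `B(n)`. -/
theorem stmt_5 (n : ℕ) (hn : Even n) (hn0 : 0 < n)
    (p₁ p₂ : ℤ × ℤ) (h₁ : p₁ ∈ SplusEven n) (h₂ : p₂ ∈ SplusEven n) :
    (p₂.1 - p₁.1, p₂.2 - p₁.2) ∉ Bset n :=
  stmt_5_general n p₁ p₂ h₁ h₂
end

section
/- Let n be a positive integer and let W ⊆ {(i,j) ∈ ℤ² : 0 ≤ i+j ≤ 2n−1} be a finite nonempty set with σW = W. Let k = max_{(i,j)∈W} |i−j| and assume k > n/2 (i.e. 2k > n). If some (i,j) ∈ W satisfies |i−j| = k and i+j ≥ n, then the set S = {(i,j) ∈ W : j − i = k and i+j ≥ n} is a minimal subset of W and S is good. -/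
/-! Going up in `≼` can only decrease the width `j - i`, and along a fixed width it moves
down the anti-diagonal `i + j`. So the points of maximal width `k` are minimal in `W`
as soon as one keeps all of them above a given level of `i + j`. Goodness is a width
count: `σ` followed by a shift by `(a, 0)` turns width `k` into `a - k`, which equals `k`
only for `a = 2k > n`. -/

/-- The partial order on `ℤ²`: `(i,j) ≼ (i′,j′)` iff there exist `l, m ∈ ℕ` with
`i′ = i + l − m` and `j′ = j − m`. -/
def Prec (p q : ℤ × ℤ) : Prop :=
  ∃ l m : ℕ, q.1 = p.1 + (l : ℤ) - (m : ℤ) ∧ q.2 = p.2 - (m : ℤ)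

/-- `σ(i,j) = (j,i)`.  A set `S ⊆ ℤ²` is *good* (for `n`) if
`(⋃_{a=0}^{n} (σS − (a,0))) ∩ S = ∅`. -/
def Good (n : ℕ) (S : Set (ℤ × ℤ)) : Prop :=
  ∀ a : ℕ, a ≤ n → ∀ p ∈ S, ((p.2 - (a : ℤ), p.1) : ℤ × ℤ) ∉ S

def IsMinimalSubset (S W : Set (ℤ × ℤ)) : Prop :=
  ∀ s ∈ S, ∀ w ∈ W, w ∉ S → ¬ Prec w s

namespace Prec

variable {p q : ℤ × ℤ}

theorem sub_le (h : Prec p q) : q.2 - q.1 ≤ p.2 - p.1 := by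
  obtain ⟨l, m, h₁, h₂⟩ := h
  omega

theorem add_le_of_sub_eq (h : Prec p q) (hw : q.2 - q.1 = p.2 - p.1) :
    q.1 + q.2 ≤ p.1 + p.2 := by
  obtain ⟨l, m, h₁, h₂⟩ := h
  omega

end Prec

theorem isMinimalSubset_sep_width_eq {W : Set (ℤ × ℤ)} {k c : ℤ}
    (hk : ∀ p ∈ W, p.2 - p.1 ≤ k) :
    IsMinimalSubset {p ∈ W | p.2 - p.1 = k ∧ c ≤ p.1 + p.2} W := by
  rintro s ⟨-, hsk, hsc⟩ w hwW hwS hws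
  have hwk : w.2 - w.1 = k := le_antisymm (hk w hwW) (hsk ▸ hws.sub_le)
  exact hwS ⟨hwW, hwk, hsc.trans (hws.add_le_of_sub_eq (hsk.trans hwk.symm))⟩

theorem good_of_width_eq {n : ℕ} {S : Set (ℤ × ℤ)} {k : ℤ}
    (hS : ∀ p ∈ S, p.2 - p.1 = k) (hkn : (n : ℤ) < 2 * k) : Good n S := by
  intro a ha p hp hq
  have hp' := hS p hp
  have hq' := hS _ hq
  simp only at hq'
  omega

theorem stmt_6_general (n : ℕ)
    (W : Set (ℤ × ℤ))
    (k : ℤ)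
    (hk_ub : ∀ p ∈ W, |p.1 - p.2| ≤ k)
    (hkn : (n : ℤ) < 2 * k) :
    (∀ s ∈ {p ∈ W | p.2 - p.1 = k ∧ (n : ℤ) ≤ p.1 + p.2},
      ∀ w ∈ W, w ∉ {p ∈ W | p.2 - p.1 = k ∧ (n : ℤ) ≤ p.1 + p.2} → ¬ Prec w s) ∧
    Good n {p ∈ W | p.2 - p.1 = k ∧ (n : ℤ) ≤ p.1 + p.2} := by
  have hwidth : ∀ p ∈ W, p.2 - p.1 ≤ k := fun p hp =>
    (le_abs_self _).trans ((abs_sub_comm _ _).trans_le (hk_ub p hp))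
  exact ⟨isMinimalSubset_sep_width_eq hwidth, good_of_width_eq (fun _ hp => hp.2.1) hkn⟩

/-- Let `W ⊆ {0 ≤ i+j ≤ 2n−1}` be a finite nonempty σ-symmetric set, `k` the maximal
width `|i−j|` on `W`, with `2k > n`.  If some `(i,j) ∈ W` has `|i−j| = k` and
`i+j ≥ n`, then `S = {(i,j) ∈ W : j−i = k, i+j ≥ n}` is a minimal subset of `W`
and `S` is good. -/
theorem stmt_6 (n : ℕ) (hn : 0 < n)
    (W : Set (ℤ × ℤ)) (hfin : W.Finite) (hne : W.Nonempty)
    (hband : ∀ p ∈ W, 0 ≤ p.1 + p.2 ∧ p.1 + p.2 ≤ 2 * (n : ℤ) - 1)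
    (hσ : ∀ p : ℤ × ℤ, p ∈ W ↔ ((p.2, p.1) : ℤ × ℤ) ∈ W)
    (k : ℤ)
    (hk_ub : ∀ p ∈ W, |p.1 - p.2| ≤ k)
    (hk_mem : ∃ p ∈ W, |p.1 - p.2| = k)
    (hkn : (n : ℤ) < 2 * k)
    (hex : ∃ p ∈ W, |p.1 - p.2| = k ∧ (n : ℤ) ≤ p.1 + p.2) :
    (∀ s ∈ {p ∈ W | p.2 - p.1 = k ∧ (n : ℤ) ≤ p.1 + p.2},
      ∀ w ∈ W, w ∉ {p ∈ W | p.2 - p.1 = k ∧ (n : ℤ) ≤ p.1 + p.2} → ¬ Prec w s) ∧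
    Good n {p ∈ W | p.2 - p.1 = k ∧ (n : ℤ) ≤ p.1 + p.2} :=
  stmt_6_general n W k hk_ub hkn
end

section
/- Let n be a positive integer and let W ⊆ {(i,j) ∈ ℤ² : 0 ≤ i+j ≤ 2n−1} be a finite nonempty set with σW = W. Let k = max_{(i,j)∈W} |i−j| and assume k > n/2 (i.e. 2k > n). If some (i,j) ∈ W satisfies |i−j| = k and i+j < n, then the set S = {(i,j) ∈ W : i − j = k and i+j < n} is a maximal subset of W, and −S = {(−i,−j) : (i,j) ∈ S} is good. -/
/-! Along `≼` the width `i - j` never decreases and `i + j` can only drop when the width is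
kept, so the points of maximal width `k` below the line `i + j = n` form a maximal subset.
Negation turns them into points of width `-k`, which the shifted reflection sends to width
`k - a ≠ -k` for `a ≤ n < 2k`. -/

theorem Prec.eq_sub_diag_of_sub_le {s w : ℤ × ℤ} (h : Prec s w)
    (hw : w.1 - w.2 ≤ s.1 - s.2) : ∃ m : ℕ, w = (s.1 - m, s.2 - m) := by
  obtain ⟨l, m, h1, h2⟩ := h
  exact ⟨m, Prod.ext (by omega) h2⟩

def IsMaximalSubset (S W : Set (ℤ × ℤ)) : Prop :=
  ∀ s ∈ S, ∀ w ∈ W, w ∉ S → ¬ Prec s w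

theorem isMaximalSubset_sub_eq_of_sub_le {W : Set (ℤ × ℤ)} {k c : ℤ}
    (hk : ∀ p ∈ W, p.1 - p.2 ≤ k) :
    IsMaximalSubset {p ∈ W | p.1 - p.2 = k ∧ p.1 + p.2 < c} W := by
  rintro s ⟨-, hsk, hsc⟩ w hwW hwS hsw
  obtain ⟨m, rfl⟩ := hsw.eq_sub_diag_of_sub_le (by simpa [hsk] using hk w hwW)
  exact hwS ⟨hwW, by simp only; omega, by simp only; omega⟩

theorem good_of_sub_eq_neg {n : ℕ} {k : ℤ} {T : Set (ℤ × ℤ)} (hkn : (n : ℤ) < 2 * k)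
    (hT : ∀ p ∈ T, p.1 - p.2 = -k) : Good n T := by
  intro a ha p hp hq
  have hp' := hT p hp
  have hq' : p.2 - a - p.1 = -k := hT _ hq
  omega

theorem stmt_7_general (n : ℕ)
    (W : Set (ℤ × ℤ))
    (k : ℤ)
    (hk_ub : ∀ p ∈ W, |p.1 - p.2| ≤ k)
    (hkn : (n : ℤ) < 2 * k) :
    (∀ s ∈ {p ∈ W | p.1 - p.2 = k ∧ p.1 + p.2 < (n : ℤ)},
      ∀ w ∈ W, w ∉ {p ∈ W | p.1 - p.2 = k ∧ p.1 + p.2 < (n : ℤ)} → ¬ Prec s w) ∧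
    Good n ((fun q : ℤ × ℤ => (-q.1, -q.2)) ''
      {p ∈ W | p.1 - p.2 = k ∧ p.1 + p.2 < (n : ℤ)}) := by
  refine ⟨isMaximalSubset_sub_eq_of_sub_le fun p hp => (abs_le.mp (hk_ub p hp)).2, ?_⟩
  refine good_of_sub_eq_neg hkn ?_
  rintro _ ⟨p, ⟨-, hpk, -⟩, rfl⟩
  simp only
  omega

/-- Let `W ⊆ {0 ≤ i+j ≤ 2n−1}` be a finite nonempty σ-symmetric set, `k` the maximal
width `|i−j|` on `W`, with `2k > n`.  If some `(i,j) ∈ W` has `|i−j| = k` and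
`i+j < n`, then `S = {(i,j) ∈ W : i−j = k, i+j < n}` is a maximal subset of `W`
and `−S` is good. -/
theorem stmt_7 (n : ℕ) (hn : 0 < n)
    (W : Set (ℤ × ℤ)) (hfin : W.Finite) (hne : W.Nonempty)
    (hband : ∀ p ∈ W, 0 ≤ p.1 + p.2 ∧ p.1 + p.2 ≤ 2 * (n : ℤ) - 1)
    (hσ : ∀ p : ℤ × ℤ, p ∈ W ↔ ((p.2, p.1) : ℤ × ℤ) ∈ W)
    (k : ℤ)
    (hk_ub : ∀ p ∈ W, |p.1 - p.2| ≤ k)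
    (hk_mem : ∃ p ∈ W, |p.1 - p.2| = k)
    (hkn : (n : ℤ) < 2 * k)
    (hex : ∃ p ∈ W, |p.1 - p.2| = k ∧ p.1 + p.2 < (n : ℤ)) :
    (∀ s ∈ {p ∈ W | p.1 - p.2 = k ∧ p.1 + p.2 < (n : ℤ)},
      ∀ w ∈ W, w ∉ {p ∈ W | p.1 - p.2 = k ∧ p.1 + p.2 < (n : ℤ)} → ¬ Prec s w) ∧
    Good n ((fun q : ℤ × ℤ => (-q.1, -q.2)) ''
      {p ∈ W | p.1 - p.2 = k ∧ p.1 + p.2 < (n : ℤ)}) :=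
  stmt_7_general n W k hk_ub hkn
end

section
/- Let Q = ℂ[s,t,u,x₁,x₂,y₁,y₂]/(s·x₁ + t·x₂, t·x₁ + u·x₂, s·u − t²), and let d_r, d_l : Q³ → Q³ be the Q-linear maps given by matrix-vector multiplication with the matrices d_r = [[0, y₁, y₂], [x₁, −u, t], [x₂, t, −s]] and d_l = [[0, s·y₁+t·y₂, t·y₁+u·y₂], [0, −x₂·y₂, x₁·y₂], [0, x₂·y₁, −x₁·y₁]] (entries denote the images of the polynomial variables in Q). Then the kernel of d_r equals the range of d_l as Q-submodules of Q³. -/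
/-
The ring `Q` embeds into `ℂ[a,b,c,y₁,y₂]` by `s ↦ a², t ↦ ab, u ↦ b², x₁ ↦ bc, x₂ ↦ -ac`,
`yᵢ ↦ yᵢ`. This is a monomial map, so it is injective as soon as the monomials that are standard
for the weight `3·deg s + deg t + deg x₁` (those divisible by none of the leading terms
`sx₁, tx₁, su` of the generators of `I`) span `Q` and go to distinct monomials; its image is spanned
by the monomials whose exponents lie in the image of the exponent map.

In the factorial ring `ℂ[a,b,c,y₁,y₂]` the first two rows of `d_r v = 0` force
`v = h · (a y₁ + b y₂, c y₂, -c y₁)`. That `c y₂ h` lies in the image says exactly that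
`h = a p + b q` with `p, q ∈ Q`, and then `v = d_l (0, p, q)`.
-/

noncomputable section

open MvPolynomial

namespace Stmt9

/-- `ℂ[s,t,u,x₁,x₂,y₁,y₂]`, with variables `0 ↦ s, 1 ↦ t, 2 ↦ u, 3 ↦ x₁, 4 ↦ x₂, 5 ↦ y₁, 6 ↦ y₂`. -/
abbrev P7 : Type := MvPolynomial (Fin 7) ℂ

/-- The ideal `(s·x₁ + t·x₂, t·x₁ + u·x₂, s·u − t²)`. -/
def I : Ideal P7 :=
  Ideal.span {X 0 * X 3 + X 1 * X 4, X 1 * X 3 + X 2 * X 4, X 0 * X 2 - X 1 ^ 2}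

/-- `Q = ℂ[s,t,u,x₁,x₂,y₁,y₂]/(s·x₁ + t·x₂, t·x₁ + u·x₂, s·u − t²)`. -/
abbrev Q : Type := P7 ⧸ I

def s : Q := Ideal.Quotient.mk I (X 0)
def t : Q := Ideal.Quotient.mk I (X 1)
def u : Q := Ideal.Quotient.mk I (X 2)
def x₁ : Q := Ideal.Quotient.mk I (X 3)
def x₂ : Q := Ideal.Quotient.mk I (X 4)
def y₁ : Q := Ideal.Quotient.mk I (X 5)
def y₂ : Q := Ideal.Quotient.mk I (X 6)

/-- `d_r = [[0, y₁, y₂], [x₁, −u, t], [x₂, t, −s]]` acting by matrix-vector multiplication. -/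
def dr : (Fin 3 → Q) →ₗ[Q] (Fin 3 → Q) :=
  Matrix.mulVecLin !![0, y₁, y₂; x₁, -u, t; x₂, t, -s]

/-- `d_l = [[0, s·y₁+t·y₂, t·y₁+u·y₂], [0, −x₂·y₂, x₁·y₂], [0, x₂·y₁, −x₁·y₁]]`. -/
def dl : (Fin 3 → Q) →ₗ[Q] (Fin 3 → Q) :=
  Matrix.mulVecLin
    !![0, s * y₁ + t * y₂, t * y₁ + u * y₂; 0, -(x₂ * y₂), x₁ * y₂; 0, x₂ * y₁, -(x₁ * y₁)]

end Stmt9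

section MonomialMap

variable {σ τ R : Type*} [CommSemiring R] (γ : σ → τ →₀ ℕ) (a : σ → R)

theorem X_mul_X_eq_monomial (i j : σ) :
    (X i * X j : MvPolynomial σ R) = monomial (.single i 1 + .single j 1) 1 := by
  rw [X, X, monomial_mul, mul_one]

theorem aeval_monomial_monomial (e : σ →₀ ℕ) (c : R) :
    aeval (fun i => monomial (γ i) (a i)) (monomial e c) =
      monomial (Finsupp.weight γ e) (c * e.prod fun i k => a i ^ k) := by
  simp_rw [aeval_monomial, monomial_pow, Finsupp.prod, ← monomial_sum_prod, algebraMap_eq,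
    C_mul_monomial, Finsupp.weight_apply, Finsupp.sum]

theorem aeval_monomial_monomial_eq_sum (g : MvPolynomial σ R) :
    aeval (fun i => monomial (γ i) (a i)) g =
      ∑ e ∈ g.support, monomial (Finsupp.weight γ e) (coeff e g * e.prod fun i k => a i ^ k) := by
  conv_lhs => rw [g.as_sum]
  simp only [map_sum, aeval_monomial_monomial]

end MonomialMap

section MonomialMapField

variable {σ τ K : Type*} [Field K] (γ : σ → τ →₀ ℕ) {a : σ → K}

theorem prod_pow_ne_zero (ha : ∀ i, a i ≠ 0) (e : σ →₀ ℕ) : (e.prod fun i k => a i ^ k) ≠ 0 :=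
  Finset.prod_ne_zero_iff.mpr fun i _ => pow_ne_zero _ (ha i)

theorem eq_zero_of_aeval_monomial_monomial_eq_zero (ha : ∀ i, a i ≠ 0) {S : Set (σ →₀ ℕ)}
    (hS : Set.InjOn (Finsupp.weight γ) S) {g : MvPolynomial σ K} (hg : g ∈ restrictSupport K S)
    (h : aeval (fun i => monomial (γ i) (a i)) g = 0) : g = 0 := by
  classical
  ext e₀
  by_contra he₀
  have he₀S : e₀ ∈ g.support := mem_support_iff.mpr he₀
  have hc := congrArg (coeff (Finsupp.weight γ e₀)) h
  rw [aeval_monomial_monomial_eq_sum, coeff_sum, Finset.sum_eq_single e₀, coeff_monomial,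
    if_pos rfl, coeff_zero] at hc
  · exact mul_ne_zero he₀ (prod_pow_ne_zero ha e₀) hc
  · intro e he hne
    rw [coeff_monomial, if_neg fun heq => hne (hS (hg he) (hg he₀S) heq)]
  · exact absurd he₀S

theorem mem_range_aeval_monomial_monomial_iff (ha : ∀ i, a i ≠ 0) {f : MvPolynomial τ K} :
    f ∈ (aeval (R := K) fun i => monomial (γ i) (a i)).range ↔
      f ∈ restrictSupport K (Set.range (Finsupp.weight (R := ℕ) γ)) := by
  constructor
  · rintro ⟨g, rfl⟩
    rw [AlgHom.toRingHom_eq_coe, RingHom.coe_coe, aeval_monomial_monomial_eq_sum]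
    exact Submodule.sum_mem _ fun e _ => by simp
  · intro hf
    rw [f.as_sum]
    refine Subalgebra.sum_mem _ fun d hd => ?_
    obtain ⟨e, rfl⟩ := hf hd
    refine ⟨monomial e (coeff (Finsupp.weight γ e) f / e.prod fun i k => a i ^ k), ?_⟩
    rw [AlgHom.toRingHom_eq_coe, RingHom.coe_coe, aeval_monomial_monomial,
      div_mul_cancel₀ _ (prod_pow_ne_zero ha e)]

end MonomialMapField

section NormalForm

variable {σ R : Type*} [CommRing R] {I : Ideal (MvPolynomial σ R)} {S : Set (σ →₀ ℕ)}

theorem exists_monomial_sub_mem_restrictSupport {μ : (σ →₀ ℕ) → ℕ}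
    (hred : ∀ e ∉ S, ∃ e' r, μ e' < μ e ∧ monomial e 1 - monomial e' r ∈ I)
    (e : σ →₀ ℕ) (c : R) : ∃ g ∈ restrictSupport R S, monomial e c - g ∈ I := by
  by_cases he : e ∈ S
  · exact ⟨monomial e c, by simp [he], by simp⟩
  obtain ⟨e', r, hlt, hmem⟩ := hred e he
  obtain ⟨g, hg, hgI⟩ := exists_monomial_sub_mem_restrictSupport hred e' (r * c)
  refine ⟨g, hg, ?_⟩
  have hsplit : monomial e c - g =
      C c * (monomial e 1 - monomial e' r) + (monomial e' (r * c) - g) := by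
    rw [mul_sub, C_mul_monomial, C_mul_monomial, mul_one, mul_comm c r]
    ring
  rw [hsplit]
  exact add_mem (I.mul_mem_left _ hmem) hgI
termination_by μ e

theorem exists_sub_mem_restrictSupport {μ : (σ →₀ ℕ) → ℕ}
    (hred : ∀ e ∉ S, ∃ e' r, μ e' < μ e ∧ monomial e 1 - monomial e' r ∈ I)
    (p : MvPolynomial σ R) : ∃ g ∈ restrictSupport R S, p - g ∈ I := by
  induction p using MvPolynomial.induction_on' with
  | monomial e c => exact exists_monomial_sub_mem_restrictSupport hred e c
  | add p q hp hq =>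
    obtain ⟨g, hg, hgI⟩ := hp
    obtain ⟨h, hh, hhI⟩ := hq
    refine ⟨g + h, add_mem hg hh, ?_⟩
    rw [add_sub_add_comm]
    exact add_mem hgI hhI

theorem exists_reduction_of_le (μ : (σ →₀ ℕ) →+ ℕ) {e f g : σ →₀ ℕ} {r : R} (hfe : f ≤ e)
    (hμ : μ g < μ f) (hI : monomial f 1 - monomial g r ∈ I) :
    ∃ e' r', μ e' < μ e ∧ monomial e 1 - monomial e' r' ∈ I := by
  obtain ⟨d, rfl⟩ := exists_add_of_le hfe
  refine ⟨g + d, r, by simpa only [map_add, add_lt_add_iff_right] using hμ, ?_⟩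
  have hfac : monomial (f + d) 1 - monomial (g + d) r =
      (monomial f 1 - monomial g r) * monomial d 1 := by
    rw [sub_mul, monomial_mul, monomial_mul, mul_one, mul_one]
  rw [hfac]
  exact I.mul_mem_right _ hI

end NormalForm

theorem single_add_single_le {σ : Type*} {e : σ →₀ ℕ} {i j : σ} (hij : i ≠ j) (hi : e i ≠ 0)
    (hj : e j ≠ 0) : Finsupp.single i 1 + Finsupp.single j 1 ≤ e := by
  classical
  intro k
  simp only [Finsupp.add_apply, Finsupp.single_apply]
  split_ifs <;> subst_vars <;> simp_all <;> omega

theorem not_X_dvd_of_eval_ne_zero {σ R : Type*} [CommRing R] {i : σ} {f : MvPolynomial σ R}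
    (x : σ → R) (hx : x i = 0) (hf : eval x f ≠ 0) : ¬X i ∣ f :=
  fun ⟨g, hg⟩ => hf (by rw [hg, map_mul, eval_X, hx, zero_mul])

theorem exists_eq_of_syzygy {R : Type*} [CommRing R] [IsDomain R] {a b c y₁ y₂ v₀ v₁ v₂ : R}
    (hy₂ : Prime y₂) (hy₁ : ¬y₂ ∣ y₁) (hc : Prime c) (hc' : ¬c ∣ a * y₁ + b * y₂)
    (h₀ : y₁ * v₁ + y₂ * v₂ = 0) (h₁ : c * v₀ = b * v₁ - a * v₂) :
    ∃ h, v₀ = (a * y₁ + b * y₂) * h ∧ v₁ = c * y₂ * h ∧ v₂ = -(c * y₁ * h) := by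
  obtain ⟨k, rfl⟩ : y₂ ∣ v₁ :=
    (hy₂.dvd_or_dvd ⟨-v₂, by linear_combination h₀⟩).resolve_left hy₁
  obtain rfl : v₂ = -(y₁ * k) := mul_left_cancel₀ hy₂.ne_zero (by linear_combination h₀)
  obtain ⟨h, rfl⟩ : c ∣ k := (hc.dvd_or_dvd ⟨v₀, by linear_combination -h₁⟩).resolve_left hc'
  exact ⟨h, mul_left_cancel₀ hc.ne_zero (by linear_combination h₁), by ring, by ring⟩

namespace Stmt9

/-- `ℂ[a,b,c,y₁,y₂]`, with variables `0 ↦ a, 1 ↦ b, 2 ↦ c, 3 ↦ y₁, 4 ↦ y₂`. -/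
abbrev P5 : Type := MvPolynomial (Fin 5) ℂ

def γ : Fin 7 → Fin 5 →₀ ℕ :=
  ![.single 0 2, .single 0 1 + .single 1 1, .single 1 2, .single 1 1 + .single 2 1,
    .single 0 1 + .single 2 1, .single 3 1, .single 4 1]

def ε : Fin 7 → ℂ := ![1, 1, 1, 1, -1, 1, 1]

def param : P7 →ₐ[ℂ] P5 := aeval fun i => monomial (γ i) (ε i)

abbrev ψ : (Fin 7 →₀ ℕ) →+ Fin 5 →₀ ℕ := Finsupp.weight γ

theorem ε_ne_zero (i : Fin 7) : ε i ≠ 0 := by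
  fin_cases i <;> simp [ε]

theorem param_X (i : Fin 7) :
    param (X i) = ![X 0 ^ 2, X 0 * X 1, X 1 ^ 2, X 1 * X 2, -(X 0 * X 2), X 3, X 4] i := by
  rw [param, aeval_X]
  fin_cases i <;> simp [γ, ε, X_pow_eq_monomial, X_mul_X_eq_monomial] <;> rfl

theorem I_le_ker_param : I ≤ RingHom.ker param := by
  rw [I, Ideal.span_le]
  rintro f (rfl | rfl | rfl) <;> simp [param_X] <;> ring

theorem coe_ψ (e : Fin 7 →₀ ℕ) :
    ⇑(ψ e) = ![2 * e 0 + e 1 + e 4, e 1 + 2 * e 2 + e 3, e 3 + e 4, e 5, e 6] := by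
  funext j
  fin_cases j <;> simp [Finsupp.weight_eq_sum, Fin.sum_univ_seven, γ] <;> ring

/-- Not divisible by `s x₁`, `t x₁` or `s u`. -/
def IsStandard (e : Fin 7 →₀ ℕ) : Prop :=
  (e 0 = 0 ∨ e 3 = 0) ∧ (e 1 = 0 ∨ e 3 = 0) ∧ (e 0 = 0 ∨ e 2 = 0)

theorem injOn_ψ : Set.InjOn ψ {e | IsStandard e} := by
  rintro e ⟨a₁, a₂, a₃⟩ e' ⟨b₁, b₂, b₃⟩ h
  have hc := congrArg (⇑) h
  rw [coe_ψ, coe_ψ] at hc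
  have h₀ := congrFun hc 0
  have h₁ := congrFun hc 1
  have h₂ := congrFun hc 2
  have h₃ := congrFun hc 3
  have h₄ := congrFun hc 4
  simp only [Fin.isValue, Matrix.cons_val] at h₀ h₁ h₂ h₃ h₄
  ext i
  fin_cases i <;> simp <;> omega

/-- The weight making `s x₁`, `t x₁`, `s u` the leading terms of the generators of `I`. -/
def μ : (Fin 7 →₀ ℕ) →+ ℕ := Finsupp.weight ![3, 1, 0, 1, 0, 0, 0]

theorem exists_reduction (e : Fin 7 →₀ ℕ) (he : e ∉ {e | IsStandard e}) :
    ∃ e' r, μ e' < μ e ∧ monomial e 1 - monomial e' r ∈ I := by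
  simp only [Set.mem_ofPred_eq, IsStandard, not_and_or, not_or] at he
  rcases he with ⟨h₀, h₃⟩ | ⟨h₁, h₃⟩ | ⟨h₀, h₂⟩
  · refine exists_reduction_of_le μ (single_add_single_le (by decide) h₀ h₃)
      (g := .single 1 1 + .single 4 1) (r := -1) (by simp [μ, Finsupp.weight_single]) ?_
    have hgen : X 0 * X 3 + X 1 * X 4 ∈ I := Ideal.subset_span (Or.inl rfl)
    simpa [X_mul_X_eq_monomial] using hgen
  · refine exists_reduction_of_le μ (single_add_single_le (by decide) h₁ h₃)
      (g := .single 2 1 + .single 4 1) (r := -1) (by simp [μ, Finsupp.weight_single]) ?_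
    have hgen : X 1 * X 3 + X 2 * X 4 ∈ I := Ideal.subset_span (Or.inr (Or.inl rfl))
    simpa [X_mul_X_eq_monomial] using hgen
  · refine exists_reduction_of_le μ (single_add_single_le (by decide) h₀ h₂)
      (g := .single 1 2) (r := 1) (by simp [μ, Finsupp.weight_single]) ?_
    have hgen : X 0 * X 2 - X 1 ^ 2 ∈ I := Ideal.subset_span (Or.inr (Or.inr rfl))
    simpa [X_mul_X_eq_monomial, X_pow_eq_monomial] using hgen

theorem ker_param : RingHom.ker param = I := by
  refine le_antisymm (fun p hp => ?_) I_le_ker_param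
  obtain ⟨g, hg, hgI⟩ := exists_sub_mem_restrictSupport exists_reduction p
  have hg0 : param g = 0 := by
    have := I_le_ker_param hgI
    rwa [RingHom.mem_ker, map_sub, RingHom.mem_ker.mp hp, zero_sub, neg_eq_zero] at this
  rwa [eq_zero_of_aeval_monomial_monomial_eq_zero γ ε_ne_zero injOn_ψ hg hg0, sub_zero] at hgI

def embed : Q →+* P5 := Ideal.Quotient.lift I param fun _ ha => I_le_ker_param ha

theorem embed_injective : Function.Injective embed :=
  RingHom.lift_injective_of_ker_le_ideal I _ ker_param.le

theorem exists_embed_eq_iff {f : P5} :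
    (∃ q, embed q = f) ↔ f ∈ restrictSupport ℂ (Set.range ψ) := by
  rw [← mem_range_aeval_monomial_monomial_iff γ ε_ne_zero, Ideal.Quotient.mk_surjective.exists]
  rfl

theorem exists_embed_eq_monomial (e : Fin 7 →₀ ℕ) (c : ℂ) : ∃ p, embed p = monomial (ψ e) c :=
  exists_embed_eq_iff.mpr ((monomial_mem_restrictSupport ℂ).mpr (Or.inl (Set.mem_range_self e)))

@[simp] theorem embed_s : embed s = X 0 ^ 2 := param_X 0
@[simp] theorem embed_t : embed t = X 0 * X 1 := param_X 1
@[simp] theorem embed_u : embed u = X 1 ^ 2 := param_X 2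
@[simp] theorem embed_x₁ : embed x₁ = X 1 * X 2 := param_X 3
@[simp] theorem embed_x₂ : embed x₂ = -(X 0 * X 2) := param_X 4
@[simp] theorem embed_y₁ : embed y₁ = X 3 := param_X 5
@[simp] theorem embed_y₂ : embed y₂ = X 4 := param_X 6

theorem exists_eq_single_add_ψ {d : Fin 5 →₀ ℕ} {e : Fin 7 →₀ ℕ}
    (h : ψ e = .single 2 1 + .single 4 1 + d) :
    ∃ e', d = .single 0 1 + ψ e' ∨ d = .single 1 1 + ψ e' := by
  have hc := congrArg (⇑) h
  rw [coe_ψ] at hc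
  have h₂ : e 3 + e 4 = d 2 + 1 := by simpa [add_comm] using congrFun hc 2
  have h₆ : e 6 = d 4 + 1 := by simpa [add_comm] using congrFun hc 4
  by_cases h₄ : e 4 = 0
  · obtain ⟨e', rfl⟩ := exists_add_of_le
      (single_add_single_le (e := e) (i := 3) (j := 6) (by decide) (by omega) (by omega))
    refine ⟨e', Or.inr (add_left_cancel (a := .single 2 1 + .single 4 1) ?_)⟩
    rw [← h, map_add, map_add, Finsupp.weight_single, Finsupp.weight_single, one_smul, one_smul,
      show γ 3 = .single 1 1 + .single 2 1 from rfl, show γ 6 = .single 4 1 from rfl]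
    abel
  · obtain ⟨e', rfl⟩ := exists_add_of_le
      (single_add_single_le (e := e) (i := 4) (j := 6) (by decide) h₄ (by omega))
    refine ⟨e', Or.inl (add_left_cancel (a := .single 2 1 + .single 4 1) ?_)⟩
    rw [← h, map_add, map_add, Finsupp.weight_single, Finsupp.weight_single, one_smul, one_smul,
      show γ 4 = .single 0 1 + .single 2 1 from rfl, show γ 6 = .single 4 1 from rfl]
    abel

theorem exists_eq_X_mul_embed_add_X_mul_embed {h : P5} (hh : ∃ v, embed v = X 2 * X 4 * h) :
    ∃ p q : Q, h = X 0 * embed p + X 1 * embed q := by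
  rw [exists_embed_eq_iff, X_mul_X_eq_monomial, mem_restrictSupport_iff] at hh
  rw [h.as_sum]
  refine Finset.sum_induction _ (fun f => ∃ p q : Q, f = X 0 * embed p + X 1 * embed q)
    (fun _ _ ⟨p, q, hpq⟩ ⟨p', q', hpq'⟩ =>
      ⟨p + p', q + q', by rw [hpq, hpq', map_add, map_add]; ring⟩)
    ⟨0, 0, by simp⟩ fun d hd => ?_
  obtain ⟨e, he⟩ : .single 2 1 + .single 4 1 + d ∈ Set.range ψ :=
    hh (by rwa [Finset.mem_coe, mem_support_iff, coeff_monomial_mul, one_mul, ← mem_support_iff])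
  obtain ⟨e', rfl | rfl⟩ := exists_eq_single_add_ψ he
  · obtain ⟨p, hp⟩ := exists_embed_eq_monomial e' (coeff _ h)
    exact ⟨p, 0, by rw [hp, map_zero, mul_zero, add_zero, X, monomial_mul, one_mul]⟩
  · obtain ⟨q, hq⟩ := exists_embed_eq_monomial e' (coeff _ h)
    exact ⟨0, q, by rw [hq, map_zero, mul_zero, zero_add, X, monomial_mul, one_mul]⟩

theorem dr_apply (v : Fin 3 → Q) :
    dr v = ![y₁ * v 1 + y₂ * v 2, x₁ * v 0 - u * v 1 + t * v 2, x₂ * v 0 + t * v 1 - s * v 2] := by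
  funext i
  fin_cases i <;> simp [dr, Matrix.mulVec, dotProduct, Fin.sum_univ_three] <;> ring

theorem dl_apply (w : Fin 3 → Q) :
    dl w = ![(s * y₁ + t * y₂) * w 1 + (t * y₁ + u * y₂) * w 2, x₁ * y₂ * w 2 - x₂ * y₂ * w 1,
      x₂ * y₁ * w 1 - x₁ * y₁ * w 2] := by
  funext i
  fin_cases i <;> simp [dl, Matrix.mulVec, dotProduct, Fin.sum_univ_three] <;> ring

theorem range_dl_le_ker_dr : LinearMap.range dl ≤ LinearMap.ker dr := by
  rintro _ ⟨w, rfl⟩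
  funext i
  apply embed_injective
  fin_cases i <;> simp [dr_apply, dl_apply] <;> ring

theorem ker_dr_le_range_dl : LinearMap.ker dr ≤ LinearMap.range dl := by
  intro v hv
  rw [LinearMap.mem_ker, dr_apply] at hv
  have e₀ := congrArg embed (congrFun hv 0)
  have e₁ := congrArg embed (congrFun hv 1)
  simp only [Matrix.cons_val_zero, Matrix.cons_val_one, Pi.zero_apply, map_add, map_sub, map_mul,
    map_zero, embed_y₁, embed_y₂, embed_x₁, embed_u, embed_t] at e₀ e₁
  have h₁ : X 2 * embed (v 0) = X 1 * embed (v 1) - X 0 * embed (v 2) :=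
    mul_left_cancel₀ (X_ne_zero 1) (by linear_combination e₁)
  obtain ⟨h, hv₀, hv₁, hv₂⟩ := exists_eq_of_syzygy X_prime
    (not_X_dvd_of_eval_ne_zero ![0, 0, 0, 1, 0] rfl (by simp)) X_prime
    (not_X_dvd_of_eval_ne_zero ![1, 0, 0, 1, 0] rfl (by simp)) e₀ h₁
  obtain ⟨p, q, rfl⟩ := exists_eq_X_mul_embed_add_X_mul_embed ⟨v 1, hv₁⟩
  refine ⟨![0, p, q], funext fun i => embed_injective ?_⟩
  fin_cases i <;> simp [dl_apply, hv₀, hv₁, hv₂] <;> ring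

/-- `ker d_r = range d_l` as `Q`-submodules of `Q³`. -/
theorem stmt_9 : LinearMap.ker dr = LinearMap.range dl :=
  le_antisymm ker_dr_le_range_dl range_dl_le_ker_dr

end Stmt9
end
end
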